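/- arXiv:2007.03821 — 2 statements merged into one kernel-verified Lean document; each statement's English description precedes it below -/
import Mathlib

section
/- The ordinary generating function Y(x) = Σ_{n≥0} a_n x^n of the maximal run numbers satisfies (1−x)^2 (1+x) · Y(x) = x as an identity of formal power series over ℚ (equivalently, Y(x) = x/((1−x)^2(1+x))). -/
open Finset

/-- The word of a permutation `σ` of `Fin n`: the letter at (0-based) position `i`,
viewed as a natural number (the letters are `0, 1, ..., n-1`, identified with the usual
letters `1, ..., n`); junk value `0` outside the range. -/
def entry {n : ℕ} (σ : Equiv.Perm (Fin n)) (i : ℕ) : ℕ :=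
  if h : i < n then (σ ⟨i, h⟩ : ℕ) else 0

/-- Position `i` starts a run of the word `w`: either `i = 0`, or there is a
descent at position `i - 1`. -/
def WordRunStart (w : ℕ → ℕ) (i : ℕ) : Prop :=
  i = 0 ∨ w i < w (i - 1)

instance (w : ℕ → ℕ) (i : ℕ) : Decidable (WordRunStart w i) :=
  inferInstanceAs (Decidable (i = 0 ∨ w i < w (i - 1)))

/-- The number of runs of the length-`m` word `w` (maximal consecutive increasing subwords). -/
def wordRuns (w : ℕ → ℕ) (m : ℕ) : ℕ :=
  ((Finset.range m).filter fun i => WordRunStart w i).card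

/-- The length-`m` word `w` is flattened: the first entries of its runs,
read from left to right, increase. -/
def WordFlattened (w : ℕ → ℕ) (m : ℕ) : Prop :=
  ∀ i < m, ∀ j < m, WordRunStart w i → WordRunStart w j → i < j → w i < w j

instance (w : ℕ → ℕ) (m : ℕ) : Decidable (WordFlattened w m) :=
  inferInstanceAs (Decidable (∀ i < m, ∀ j < m,
    WordRunStart w i → WordRunStart w j → i < j → w i < w j))

/-- Position `i` (0-based) starts a run of the permutation `σ`. -/
def IsRunStart {n : ℕ} (σ : Equiv.Perm (Fin n)) (i : ℕ) : Prop :=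
  i < n ∧ WordRunStart (entry σ) i

instance {n : ℕ} (σ : Equiv.Perm (Fin n)) (i : ℕ) : Decidable (IsRunStart σ i) :=
  inferInstanceAs (Decidable (i < n ∧ WordRunStart (entry σ) i))

/-- The number of runs of the permutation `σ`. -/
def runCount {n : ℕ} (σ : Equiv.Perm (Fin n)) : ℕ :=
  wordRuns (entry σ) n

/-- `σ` is a flattened partition. -/
def IsFlattened {n : ℕ} (σ : Equiv.Perm (Fin n)) : Prop :=
  WordFlattened (entry σ) n

instance {n : ℕ} (σ : Equiv.Perm (Fin n)) : Decidable (IsFlattened σ) :=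
  inferInstanceAs (Decidable (WordFlattened (entry σ) n))

/-- `flatSet n k`: the set `F_{n,k}` of flattened partitions over `[n]` with exactly `k` runs. -/
def flatSet (n k : ℕ) : Finset (Equiv.Perm (Fin n)) :=
  Finset.univ.filter fun σ => IsFlattened σ ∧ runCount σ = k

/-- `f n k = |F_{n,k}|`, the number of flattened partitions over `[n]` with exactly `k` runs. -/
def f (n k : ℕ) : ℕ := (flatSet n k).card

/-- `a n`: the maximal number of runs of a flattened partition over `[n]` (with `a 0 = 0`,
since the empty permutation has no runs). -/
def a (n : ℕ) : ℕ :=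
  (Finset.univ.filter fun σ : Equiv.Perm (Fin n) => IsFlattened σ).sup runCount

/-! In a flattened word two consecutive positions cannot both start runs: that would be a
descent `w (i+1) < w i` between two run starts, whose first letters must increase. So every run
but the last has length at least two and there are at most `⌈n/2⌉` runs; the word
`1, 3, 2, 5, 4, …` attains this. Hence `a n = ⌈n/2⌉`, which satisfies
`a (n+3) - a (n+2) - a (n+1) + a n = 0`, the recurrence read off
`(1 - x)^2 (1 + x) = 1 - x - x^2 + x^3`. -/

theorem Finset.card_le_half_of_succ_notMem {s : Finset ℕ} {n : ℕ} (hs : s ⊆ range n)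
    (h : ∀ i ∈ s, i + 1 ∉ s) : #s ≤ (n + 1) / 2 := by
  have hmaps : Set.MapsTo (· / 2) s (range ((n + 1) / 2)) := fun i hi => by
    have := mem_range.1 (hs hi)
    simp only [coe_range, Set.mem_Iio]
    omega
  have hinj : Set.InjOn (· / 2) s := by
    intro p hp q hq (hpq : p / 2 = q / 2)
    by_contra hne
    rcases lt_or_gt_of_ne hne with hlt | hlt
    · exact h p hp (by rwa [show p + 1 = q by omega])
    · exact h q hq (by rwa [show q + 1 = p by omega])
  simpa using card_le_card_of_injOn _ hmaps hinj

theorem WordFlattened.not_wordRunStart_succ {w : ℕ → ℕ} {m i : ℕ} (h : WordFlattened w m)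
    (hi : i + 1 < m) (hs : WordRunStart w i) : ¬ WordRunStart w (i + 1) := by
  rintro (h0 | hdesc)
  · omega
  · have := h i (by omega) (i + 1) hi hs (.inr hdesc) (Nat.lt_succ_self i)
    simp only [Nat.add_sub_cancel] at hdesc
    omega

theorem WordFlattened.wordRuns_le {w : ℕ → ℕ} {m : ℕ} (h : WordFlattened w m) :
    wordRuns w m ≤ (m + 1) / 2 := by
  refine card_le_half_of_succ_notMem (filter_subset _ _) fun i hi hi1 => ?_
  simp only [mem_filter, mem_range] at hi hi1
  exact h.not_wordRunStart_succ hi1.1 hi.2 hi1.2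

def zigzag (n i : ℕ) : ℕ :=
  if i = 0 then 0 else if i % 2 = 1 then min (i + 1) (n - 1) else i - 1

theorem zigzag_lt {n i : ℕ} (hi : i < n) : zigzag n i < n := by
  unfold zigzag; split_ifs <;> omega

theorem zigzag_zigzag {n i : ℕ} (hi : i < n) : zigzag n (zigzag n i) = i := by
  unfold zigzag; split_ifs <;> omega

def zigzagPerm (n : ℕ) : Equiv.Perm (Fin n) :=
  Function.Involutive.toPerm (fun i => ⟨zigzag n i, zigzag_lt i.2⟩)
    fun i => Fin.ext (zigzag_zigzag i.2)

theorem entry_zigzagPerm {n i : ℕ} (hi : i < n) : entry (zigzagPerm n) i = zigzag n i := by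
  simp [entry, hi, zigzagPerm, Function.Involutive.toPerm]

theorem wordRunStart_zigzagPerm_iff {n i : ℕ} (hi : i < n) :
    WordRunStart (entry (zigzagPerm n)) i ↔ i % 2 = 0 := by
  unfold WordRunStart
  rw [entry_zigzagPerm hi, entry_zigzagPerm (by omega : i - 1 < n)]
  unfold zigzag
  split_ifs <;> omega

theorem isFlattened_zigzagPerm (n : ℕ) : IsFlattened (zigzagPerm n) := by
  intro i hi j hj hri hrj hij
  have hi2 := (wordRunStart_zigzagPerm_iff hi).1 hri
  have hj2 := (wordRunStart_zigzagPerm_iff hj).1 hrj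
  rw [entry_zigzagPerm hi, entry_zigzagPerm hj]
  unfold zigzag
  split_ifs <;> omega

theorem card_filter_mod_two_eq_zero_range (n : ℕ) :
    #{i ∈ range n | i % 2 = 0} = (n + 1) / 2 := by
  induction n with
  | zero => rfl
  | succ n ih =>
    rw [range_add_one, filter_insert]
    split_ifs
    · rw [card_insert_of_notMem (by simp), ih]; omega
    · rw [ih]; omega

theorem runCount_zigzagPerm (n : ℕ) : runCount (zigzagPerm n) = (n + 1) / 2 := by
  rw [runCount, wordRuns, ← card_filter_mod_two_eq_zero_range]
  congr 1
  exact filter_congr fun i hi => wordRunStart_zigzagPerm_iff (mem_range.1 hi)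

theorem a_eq_add_one_div_two (n : ℕ) : a n = (n + 1) / 2 :=
  le_antisymm (Finset.sup_le fun σ hσ => (mem_filter.1 hσ).2.wordRuns_le)
    (runCount_zigzagPerm n ▸ le_sup (by simp [isFlattened_zigzagPerm]))

theorem PowerSeries.one_sub_X_sq_mul_one_add_X_mul_mk_add_one_div_two {R : Type*}
    [CommRing R] :
    (1 - X) ^ 2 * (1 + X) * mk (fun n => (((n + 1) / 2 : ℕ) : R)) = X := by
  rw [show ((1 - X) ^ 2 * (1 + X) : PowerSeries R) = 1 - X ^ 1 - X ^ 2 + X ^ 3 by ring]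
  ext n
  simp only [sub_mul, add_mul, one_mul, map_add, map_sub, coeff_X_pow_mul', coeff_mk, coeff_X]
  rcases n with _ | _ | _ | m
  · simp
  · simp
  · simp
  · have h1 : (m + 3 + 1) / 2 = (m + 1 + 1) / 2 + 1 := by omega
    have h2 : (m + 2 + 1) / 2 = (m + 1) / 2 + 1 := by omega
    simp [h1, h2]

/-- The ordinary generating function `Y(x) = Σ_{n ≥ 0} a_n x^n` of the maximal run numbers
satisfies `(1 - x)^2 (1 + x) ⬝ Y(x) = x` as formal power series over `ℚ`. -/
theorem a_generating_function :
    ((1 - PowerSeries.X) ^ 2 * (1 + PowerSeries.X)) *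
      PowerSeries.mk (fun n => (a n : ℚ)) = PowerSeries.X := by
  simpa only [a_eq_add_one_div_two] using
    PowerSeries.one_sub_X_sq_mul_one_add_X_mul_mk_add_one_div_two
end

section
/- For all integers n and k with 2 ≤ k < n, the sets C_{n,k} and L_{n,k} have the same cardinality: |C_{n,k}| = |L_{n,k}|. -/
open Finset

/-- `Cset n k`: the set `C_{n,k}` of flattened partitions over `[n]` with exactly `k` runs
whose first run consists of exactly two elements (position `1` is not a run start, but
position `2` is), i.e. those of the form `1 X 2 ⋯` with `X ∈ {3, …, n}`. -/
def Cset (n k : ℕ) : Finset (Equiv.Perm (Fin n)) :=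
  (flatSet n k).filter fun σ => ¬ IsRunStart σ 1 ∧ IsRunStart σ 2

/-- The (0-based) position of the largest letter of `σ`. -/
def delPos {n : ℕ} (σ : Equiv.Perm (Fin n)) : ℕ :=
  if h : 0 < n then (σ.symm ⟨n - 1, Nat.sub_lt h Nat.one_pos⟩ : ℕ) else 0

/-- The word on `[n-1]` obtained from `σ` by deleting its largest letter `n`. -/
def delWord {n : ℕ} (σ : Equiv.Perm (Fin n)) (i : ℕ) : ℕ :=
  if i < delPos σ then entry σ i else entry σ (i + 1)

/-- The number of runs of the word obtained from `σ` by deleting its largest letter `n`. -/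
def delRuns {n : ℕ} (σ : Equiv.Perm (Fin n)) : ℕ :=
  wordRuns (delWord σ) (n - 1)

/-- `Kset n k`: the set `K_{n,k}` of flattened partitions over `[n]` with exactly `k` runs
such that deleting the letter `n` leaves the number of runs unchanged. -/
def Kset (n k : ℕ) : Finset (Equiv.Perm (Fin n)) :=
  (flatSet n k).filter fun σ => delRuns σ = k

/-- `Lset n k`: the set `L_{n,k}` of flattened partitions over `[n]` with exactly `k` runs
such that deleting the letter `n` reduces the number of runs by one. -/
def Lset (n k : ℕ) : Finset (Equiv.Perm (Fin n)) :=
  (flatSet n k).filter fun σ => delRuns σ = k - 1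

/-!
Write `σ ∈ L_{n,k}` as `σ = u n b v`. Deleting `n` loses a run exactly when the last letter of `u`
is smaller than `b`, and since `b` heads a run of a flattened word, every letter of `v` exceeds
`b`. So `τ = 1 (b+1) (u+1) (v+1)` has as many runs as `σ`: in `σ` the run headed by `b` absorbs
the first run of `v`, in `τ` the last run of `u+1` does. The run heads of `σ` are those of `u`,
then `b`, then the later ones of `v`; as `b` lies strictly between the two groups, `σ` is flattened
iff `τ` is. Conversely `σ` is recovered from `τ = 1 X 2 ⋯ ∈ C_{n,k}` by lowering the letters and
reinserting `n (X-1)` right after the last letter smaller than `X`. On permutations both maps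
multiply by the cyclic rotation of the letters and by the square of a cycle of positions, so they
are mutually inverse as soon as their insertion slots agree.
-/

open Equiv

section Words

variable {v w : ℕ → ℕ} {a b c d i j m p : ℕ}

def runStartCount (w : ℕ → ℕ) (a b : ℕ) : ℕ :=
  #{i ∈ Ico a b | WordRunStart w i}

lemma wordRuns_eq_runStartCount (w : ℕ → ℕ) (m : ℕ) : wordRuns w m = runStartCount w 0 m := by
  rw [wordRuns, runStartCount, range_eq_Ico]

lemma runStartCount_add (w : ℕ → ℕ) (hab : a ≤ b) (hbc : b ≤ c) :
    runStartCount w a b + runStartCount w b c = runStartCount w a c := by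
  rw [runStartCount, runStartCount, runStartCount, ← Ico_union_Ico_eq_Ico hab hbc,
    filter_union, card_union_of_disjoint
      (disjoint_filter_filter (Ico_disjoint_Ico_consecutive a b c))]

lemma runStartCount_succ (w : ℕ → ℕ) (a : ℕ) :
    runStartCount w a (a + 1) = if WordRunStart w a then 1 else 0 := by
  rw [runStartCount, Nat.Ico_succ_singleton, filter_singleton]
  split_ifs <;> rfl

lemma runStartCount_congr (h : ∀ i, a ≤ i → i < b → (WordRunStart v i ↔ WordRunStart w i)) :
    runStartCount v a b = runStartCount w a b := by
  rw [runStartCount, runStartCount, filter_congr fun i hi => h i (mem_Ico.1 hi).1 (mem_Ico.1 hi).2]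

lemma runStartCount_shift
    (h : ∀ i, a ≤ i → i < b → (WordRunStart v i ↔ WordRunStart w (i + d))) :
    runStartCount v a b = runStartCount w (a + d) (b + d) := by
  rw [runStartCount, runStartCount, ← map_add_right_Ico, filter_map, card_map]
  exact congrArg card (filter_congr fun i hi => h i (mem_Ico.1 hi).1 (mem_Ico.1 hi).2)

lemma one_le_wordRuns (w : ℕ → ℕ) (hm : 0 < m) : 1 ≤ wordRuns w m :=
  card_pos.2 ⟨0, mem_filter.2 ⟨mem_range.2 hm, Or.inl rfl⟩⟩

lemma wordRunStart_succ_iff : WordRunStart w (i + 1) ↔ w (i + 1) < w i := by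
  simp [WordRunStart]

theorem WordFlattened.le_of_wordRunStart (hw : WordFlattened w m) (hi : WordRunStart w i)
    (hij : i ≤ j) (hj : j < m) : w i ≤ w j := by
  induction j, hij using Nat.le_induction with
  | base => exact le_rfl
  | succ j hij ih =>
    by_cases hs : w (j + 1) < w j
    · exact (hw i (by omega) (j + 1) hj hi (wordRunStart_succ_iff.2 hs) (by omega)).le
    · exact (ih (by omega)).trans (not_lt.1 hs)

def wordErase (w : ℕ → ℕ) (p : ℕ) : ℕ → ℕ :=
  fun i => if i < p then w i else w (i + 1)

lemma wordRunStart_wordErase_of_lt (hi : i < p) :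
    WordRunStart (wordErase w p) i ↔ WordRunStart w i := by
  simp only [WordRunStart, wordErase, if_pos hi, if_pos (show i - 1 < p by omega)]

lemma wordRunStart_wordErase_of_gt (hi : p < i) :
    WordRunStart (wordErase w p) i ↔ WordRunStart w (i + 1) := by
  simp only [WordRunStart, wordErase, if_neg (show ¬i < p by omega),
    if_neg (show ¬i - 1 < p by omega), show i - 1 + 1 = i by omega, Nat.add_sub_cancel]
  omega

/-- Erasing a peak merges its run with the next one, unless its two neighbours form a descent. -/
lemma wordRuns_wordErase_of_peak (hp : 1 ≤ p) (hpm : p + 1 < m) (hl : w (p - 1) < w p)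
    (hr : w (p + 1) < w p) :
    wordRuns (wordErase w p) (m - 1) + 1 =
      wordRuns w m + if w (p + 1) < w (p - 1) then 1 else 0 := by
  have hhead : runStartCount (wordErase w p) 0 p = runStartCount w 0 p :=
    runStartCount_congr fun i _ hi => wordRunStart_wordErase_of_lt hi
  have hslot : runStartCount (wordErase w p) p (p + 1) =
      if w (p + 1) < w (p - 1) then 1 else 0 := by
    simp only [runStartCount_succ, WordRunStart, wordErase, lt_irrefl, if_false,
      if_pos (show p - 1 < p by omega), show p ≠ 0 by omega, false_or]
  have htail : runStartCount (wordErase w p) (p + 1) (m - 1) = runStartCount w (p + 2) m := by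
    rw [runStartCount_shift (d := 1) fun i hi _ => wordRunStart_wordErase_of_gt (by omega)]
    congr 1
    omega
  have hpeak : runStartCount w p (p + 1) = 0 := by
    rw [runStartCount_succ, if_neg]
    simp only [WordRunStart]
    omega
  have hnext : runStartCount w (p + 1) (p + 2) = 1 := by
    rw [runStartCount_succ, if_pos (wordRunStart_succ_iff.2 hr)]
  rw [wordRuns_eq_runStartCount, wordRuns_eq_runStartCount,
    ← runStartCount_add _ (Nat.zero_le p) (by omega : p ≤ m - 1),
    ← runStartCount_add _ (by omega : p ≤ p + 1) (by omega : p + 1 ≤ m - 1),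
    ← runStartCount_add w (Nat.zero_le p) (by omega : p ≤ m),
    ← runStartCount_add w (by omega : p ≤ p + 1) (by omega : p + 1 ≤ m),
    ← runStartCount_add w (by omega : p + 1 ≤ p + 2) (by omega : p + 2 ≤ m),
    hhead, hslot, htail, hpeak, hnext]
  omega

lemma wordRuns_wordErase_last (hm : 2 ≤ m) (hl : w (m - 2) < w (m - 1)) :
    wordRuns (wordErase w (m - 1)) (m - 1) = wordRuns w m := by
  have hlast : runStartCount w (m - 1) m = 0 := by
    have h := runStartCount_succ w (m - 1)
    rw [Nat.sub_add_cancel (by omega : 1 ≤ m), if_neg] at h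
    · exact h
    · rw [WordRunStart, show m - 1 - 1 = m - 2 by omega]
      omega
  rw [wordRuns_eq_runStartCount, wordRuns_eq_runStartCount,
    runStartCount_congr fun i _ hi => wordRunStart_wordErase_of_lt hi,
    ← runStartCount_add w (Nat.zero_le _) (Nat.sub_le m 1), hlast, add_zero]

end Words

section Perm

variable {n k : ℕ} {σ : Perm (Fin n)} {i j p x : ℕ}

lemma entry_coe (σ : Perm (Fin n)) (i : Fin n) : entry σ i = σ i := dif_pos i.2

lemma entry_lt (σ : Perm (Fin n)) (hi : i < n) : entry σ i < n := by
  rw [entry, dif_pos hi]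
  exact Fin.is_lt _

lemma entry_inj (hi : i < n) (hj : j < n) : entry σ i = entry σ j ↔ i = j := by
  simp only [entry, dif_pos hi, dif_pos hj, Fin.val_inj, σ.apply_eq_iff_eq, Fin.mk.injEq]

lemma exists_entry_eq (σ : Perm (Fin n)) (hx : x < n) : ∃ i < n, entry σ i = x :=
  ⟨σ.symm ⟨x, hx⟩, Fin.is_lt _, by rw [entry_coe, Equiv.apply_symm_apply]⟩

lemma IsFlattened.entry_zero (hσ : IsFlattened σ) (hn : 0 < n) : entry σ 0 = 0 := by
  obtain ⟨i, hi, hx⟩ := exists_entry_eq σ hn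
  have := WordFlattened.le_of_wordRunStart hσ (Or.inl rfl) (Nat.zero_le i) hi
  omega

lemma delPos_lt (hn : 0 < n) (σ : Perm (Fin n)) : delPos σ < n := by
  rw [delPos, dif_pos hn]
  exact Fin.is_lt _

lemma entry_delPos (hn : 0 < n) (σ : Perm (Fin n)) : entry σ (delPos σ) = n - 1 := by
  simp only [delPos, dif_pos hn, entry_coe, Equiv.apply_symm_apply]

lemma delPos_eq_iff (hp : p < n) : delPos σ = p ↔ entry σ p = n - 1 := by
  rw [← entry_delPos (by omega) σ, entry_inj hp (delPos_lt (by omega) σ), eq_comm]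

lemma entry_lt_pred (hj : j < n) (hne : j ≠ delPos σ) : entry σ j < n - 1 := by
  have hlt := entry_lt σ hj
  have : entry σ j ≠ n - 1 := by
    rwa [← entry_delPos (by omega) σ, ne_eq, entry_inj hj (delPos_lt (by omega) σ)]
  omega

lemma IsFlattened.one_le_delPos (hσ : IsFlattened σ) (hn : 2 ≤ n) : 1 ≤ delPos σ := by
  have := entry_delPos (by omega) σ
  by_contra h
  rw [show delPos σ = 0 by omega, hσ.entry_zero (by omega)] at this
  omega

lemma mem_flatSet : σ ∈ flatSet n k ↔ IsFlattened σ ∧ runCount σ = k := by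
  simp [flatSet]

lemma mem_Lset_iff (hn : 2 ≤ n) :
    σ ∈ Lset n k ↔ σ ∈ flatSet n k ∧ delPos σ + 2 ≤ n ∧
      entry σ (delPos σ - 1) < entry σ (delPos σ + 1) := by
  rw [Lset, mem_filter]
  refine and_congr_right fun hσ => ?_
  obtain ⟨hF, hk⟩ := mem_flatSet.1 hσ
  have hp := hF.one_le_delPos hn
  have hmax := entry_delPos (by omega) σ
  have hk1 : 1 ≤ k := hk ▸ one_le_wordRuns _ (by omega)
  have hlt := delPos_lt (by omega) σ
  have hpred := entry_lt_pred (σ := σ) (j := delPos σ - 1) (by omega) (by omega)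
  change wordRuns (wordErase (entry σ) (delPos σ)) (n - 1) = k - 1 ↔ _
  rw [runCount] at hk
  by_cases hpn : delPos σ + 2 ≤ n
  · have hnext := entry_lt_pred (σ := σ) (j := delPos σ + 1) (by omega) (by omega)
    have hpeak := wordRuns_wordErase_of_peak (w := entry σ) hp (m := n) (by omega)
      (by omega) (by omega)
    have hne : entry σ (delPos σ - 1) ≠ entry σ (delPos σ + 1) := by
      rw [ne_eq, entry_inj (by omega) (by omega)]
      omega
    split_ifs at hpeak <;> omega
  · have hlast : delPos σ = n - 1 := by omega
    have hruns := wordRuns_wordErase_last (w := entry σ) hn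
      (by rw [← hlast, show n - 2 = delPos σ - 1 by omega, hmax]; omega)
    rw [hlast, hruns]
    omega

lemma mem_Cset_iff (hn : 0 < n) :
    σ ∈ Cset n k ↔ σ ∈ flatSet n k ∧ 2 < n ∧ entry σ 2 < entry σ 1 := by
  rw [Cset, mem_filter]
  refine and_congr_right fun hσ => ?_
  have h0 := (mem_flatSet.1 hσ).1.entry_zero hn
  simp [IsRunStart, WordRunStart, h0]

end Perm

section FrontMove

variable {n : ℕ} {σ τ : Perm (Fin n)} {a i j p : ℕ}

def frontPos (p i : ℕ) : ℕ := if i ≤ p + 1 then i - 2 else i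

lemma frontPos_le (p i : ℕ) : frontPos p i ≤ i := by
  unfold frontPos; split_ifs <;> omega

lemma frontPos_add_two (hi : i < p) : frontPos p (i + 2) = i := by
  simp [frontPos, show i + 2 ≤ p + 1 by omega]

lemma frontPos_of_lt (hi : p + 1 < i) : frontPos p i = i := by
  simp [frontPos, show ¬i ≤ p + 1 by omega]

lemma frontPos_lt_frontPos_iff (hi : 2 ≤ i) (hj : 2 ≤ j) :
    frontPos p i < frontPos p j ↔ i < j := by
  unfold frontPos; split_ifs <;> omega

lemma exists_frontPos_eq (hpn : p + 2 ≤ n) (ha : a < n) (hap : a ≠ p) (hap' : a ≠ p + 1) :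
    ∃ i, 2 ≤ i ∧ i < n ∧ frontPos p i = a := by
  rcases lt_or_gt_of_ne hap with h | h
  · exact ⟨a + 2, by omega, by omega, frontPos_add_two h⟩
  · exact ⟨a, by omega, ha, frontPos_of_lt (by omega)⟩

/-- `σ = σ₀ ⋯ σ_{p-1} (n-1) b σ_{p+2} ⋯` and `τ = 0 (b+1) (σ₀+1) ⋯ (σ_{p-1}+1) (σ_{p+2}+1) ⋯`
(0-based letters): the letter at position `i ≥ 2` of `τ` comes from position `frontPos p i`
of `σ`. -/
structure IsFrontMove (σ τ : Perm (Fin n)) (p : ℕ) : Prop where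
  one_le : 1 ≤ p
  add_two_le : p + 2 ≤ n
  entry_max : entry σ p = n - 1
  entry_zero : entry τ 0 = 0
  entry_one : entry τ 1 = entry σ (p + 1) + 1
  entry_frontPos : ∀ i, 2 ≤ i → i < n → entry τ i = entry σ (frontPos p i) + 1

namespace IsFrontMove

variable (H : IsFrontMove σ τ p)
include H

lemma delPos_eq : delPos σ = p :=
  (delPos_eq_iff (by have := H.add_two_le; omega)).2 H.entry_max

lemma not_wordRunStart_max : ¬WordRunStart (entry σ) p := by
  have := entry_lt σ (show p - 1 < n by have := H.add_two_le; omega)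
  have := H.one_le
  simp only [WordRunStart, H.entry_max]
  omega

lemma wordRunStart_succ : WordRunStart (entry σ) (p + 1) := by
  have := H.add_two_le
  rw [wordRunStart_succ_iff, H.entry_max]
  exact entry_lt_pred (by omega) (by rw [H.delPos_eq]; omega)

lemma not_wordRunStart_one : ¬WordRunStart (entry τ) 1 := by
  simp [WordRunStart, H.entry_zero]

lemma entry_pred : entry τ (p + 1) = entry σ (p - 1) + 1 := by
  have := H.one_le
  rw [H.entry_frontPos _ (by omega) (by have := H.add_two_le; omega), frontPos, if_pos le_rfl,
    show p + 1 - 2 = p - 1 by omega]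

variable (h0 : entry σ 0 < entry σ (p + 1)) (hpred : entry σ (p - 1) < entry σ (p + 1))
  (htail : ∀ j, p + 2 ≤ j → j < n → entry σ (p + 1) < entry σ j)

include h0 hpred htail in
lemma wordRunStart_iff (hi : 2 ≤ i) (hin : i < n) :
    WordRunStart (entry τ) i ↔ WordRunStart (entry σ) (frontPos p i) := by
  have hp := H.one_le
  have he := H.entry_frontPos i hi hin
  rcases (show i = 2 ∨ (3 ≤ i ∧ i ≤ p + 1) ∨ i = p + 2 ∨ p + 3 ≤ i by omega) with
    rfl | ⟨hi3, hip⟩ | rfl | hi3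
  · have h2 : frontPos p 2 = 0 := frontPos_add_two (i := 0) hp
    rw [h2] at he ⊢
    exact iff_of_true (wordRunStart_succ_iff.2 (by rw [he, H.entry_one]; omega)) (Or.inl rfl)
  · have he' := H.entry_frontPos (i - 1) (by omega) (by omega)
    rw [frontPos, if_pos hip] at he
    rw [frontPos, if_pos (by omega), show i - 1 - 2 = i - 2 - 1 by omega] at he'
    rw [frontPos, if_pos hip]
    simp only [WordRunStart, he, he']
    omega
  · rw [frontPos_of_lt (by omega)] at he ⊢
    have := htail (p + 2) le_rfl hin
    simp only [WordRunStart, he, show p + 2 - 1 = p + 1 by omega, H.entry_pred]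
    omega
  · have he' := H.entry_frontPos (i - 1) (by omega) (by omega)
    rw [frontPos_of_lt (by omega)] at he he' ⊢
    simp only [WordRunStart, he, he']
    omega

include h0 hpred htail in
lemma runCount_eq : runCount τ = runCount σ := by
  have hp := H.one_le
  have hpn := H.add_two_le
  have hhead : runStartCount (entry σ) 0 p = runStartCount (entry τ) 2 (p + 2) :=
    runStartCount_shift (a := 0) (d := 2) fun i _ hi => by
      rw [H.wordRunStart_iff h0 hpred htail (by omega) (by omega), frontPos_add_two hi]
  have htl : runStartCount (entry τ) (p + 2) n = runStartCount (entry σ) (p + 2) n :=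
    runStartCount_congr fun i hi hin => by
      rw [H.wordRunStart_iff h0 hpred htail (by omega) hin, frontPos_of_lt (by omega)]
  have hτ0 : runStartCount (entry τ) 0 1 = 1 := by
    rw [runStartCount_succ, if_pos (show WordRunStart (entry τ) 0 from Or.inl rfl)]
  have hτ1 : runStartCount (entry τ) 1 2 = 0 := by
    rw [runStartCount_succ, if_neg H.not_wordRunStart_one]
  have hσp : runStartCount (entry σ) p (p + 1) = 0 := by
    rw [runStartCount_succ, if_neg H.not_wordRunStart_max]
  have hσp1 : runStartCount (entry σ) (p + 1) (p + 2) = 1 := by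
    rw [runStartCount_succ, if_pos H.wordRunStart_succ]
  rw [runCount, runCount, wordRuns_eq_runStartCount, wordRuns_eq_runStartCount,
    ← runStartCount_add (entry τ) (by omega : 0 ≤ 1) (by omega : 1 ≤ n),
    ← runStartCount_add (entry τ) (by omega : 1 ≤ 2) (by omega : 2 ≤ n),
    ← runStartCount_add (entry τ) (by omega : 2 ≤ p + 2) (by omega : p + 2 ≤ n),
    ← runStartCount_add (entry σ) (by omega : 0 ≤ p) (by omega : p ≤ n),
    ← runStartCount_add (entry σ) (by omega : p ≤ p + 1) (by omega : p + 1 ≤ n),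
    ← runStartCount_add (entry σ) (by omega : p + 1 ≤ p + 2) (by omega : p + 2 ≤ n)]
  omega

include h0 hpred htail in
lemma isFlattened_right (hσ : IsFlattened σ) : IsFlattened τ := by
  intro i hi j hj hsi hsj hij
  have hj2 : 2 ≤ j := by
    by_contra
    obtain rfl : j = 1 := by omega
    exact H.not_wordRunStart_one hsj
  rw [H.entry_frontPos j hj2 hj]
  rcases Nat.lt_or_ge i 2 with hi2 | hi2
  · obtain rfl : i = 0 := by
      by_contra
      obtain rfl : i = 1 := by omega
      exact H.not_wordRunStart_one hsi
    rw [H.entry_zero]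
    omega
  · rw [H.entry_frontPos i hi2 hi]
    have := hσ _ ((frontPos_le p i).trans_lt hi) _ ((frontPos_le p j).trans_lt hj)
      ((H.wordRunStart_iff h0 hpred htail hi2 hi).1 hsi)
      ((H.wordRunStart_iff h0 hpred htail hj2 hj).1 hsj)
      ((frontPos_lt_frontPos_iff hi2 hj2).2 hij)
    omega

include h0 hpred htail in
lemma isFlattened_left (hτ : IsFlattened τ) : IsFlattened σ := by
  have hp := H.one_le
  have hpn := H.add_two_le
  have hne : ∀ a, WordRunStart (entry σ) a → a ≠ p := fun a hs h =>
    H.not_wordRunStart_max (h ▸ hs)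
  have hτstart : ∀ a, a < n → a ≠ p → a ≠ p + 1 → WordRunStart (entry σ) a →
      ∃ i, 2 ≤ i ∧ i < n ∧ frontPos p i = a ∧ WordRunStart (entry τ) i := by
    intro a ha hap hap' hs
    obtain ⟨i, hi2, hin, rfl⟩ := exists_frontPos_eq hpn ha hap hap'
    exact ⟨i, hi2, hin, rfl, (H.wordRunStart_iff h0 hpred htail hi2 hin).2 hs⟩
  intro a ha c hc hsa hsc hac
  by_cases hc1 : c = p + 1
  · subst hc1
    obtain ⟨i, hi2, hin, rfl, hsi⟩ := hτstart a ha (hne a hsa) (by omega) hsa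
    have hip : i ≤ p + 1 := by
      by_contra h
      rw [frontPos_of_lt (by omega)] at hac
      omega
    have := WordFlattened.le_of_wordRunStart hτ hsi hip (by omega)
    rw [H.entry_frontPos i hi2 hin, H.entry_pred] at this
    omega
  by_cases ha1 : a = p + 1
  · subst ha1
    exact htail c (by have := hne c hsc; omega) hc
  obtain ⟨i, hi2, hin, rfl, hsi⟩ := hτstart _ ha (hne _ hsa) ha1 hsa
  obtain ⟨j, hj2, hjn, rfl, hsj⟩ := hτstart _ hc (hne _ hsc) hc1 hsc
  have := hτ i hin j hjn hsi hsj ((frontPos_lt_frontPos_iff hi2 hj2).1 hac)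
  rw [H.entry_frontPos i hi2 hin, H.entry_frontPos j hj2 hjn] at this
  omega

end IsFrontMove

end FrontMove

section Bijection

variable {n k p q : ℕ} {σ τ : Perm (Fin n)}

lemma coe_finRotate_eq_mod (i : Fin n) : (finRotate n i : ℕ) = ((i : ℕ) + 1) % n := by
  obtain ⟨m, rfl⟩ : ∃ m, n = m + 1 := ⟨n - 1, by have := i.pos; omega⟩
  rw [coe_finRotate]
  split_ifs with h
  · simp [h]
  · rw [Nat.mod_eq_of_lt (by have := Fin.val_lt_last h; omega)]

lemma coe_cycleRange_eq_mod (hq : q < n) (j : Fin n) :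
    (Fin.cycleRange ⟨q, hq⟩ j : ℕ) = if (j : ℕ) ≤ q then ((j : ℕ) + 1) % (q + 1) else j := by
  split_ifs with h
  · rw [Fin.coe_cycleRange_of_le (show j ≤ ⟨q, hq⟩ from h)]
    split_ifs with h'
    · rw [h', Nat.mod_self]
    · have hjq : (j : ℕ) ≠ q := fun e => h' (Fin.ext e)
      rw [Nat.mod_eq_of_lt (by omega)]
  · rw [Fin.cycleRange_of_gt (Fin.lt_def.2 (by rw [Fin.val_mk]; omega))]

def rotTwo (n q : ℕ) : Perm (Fin n) :=
  if h : q < n then Fin.cycleRange ⟨q, h⟩ ^ 2 else 1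

lemma coe_rotTwo (hq : q < n) (j : Fin n) :
    (rotTwo n q j : ℕ) = if (j : ℕ) ≤ q then ((j : ℕ) + 2) % (q + 1) else j := by
  rw [rotTwo, dif_pos hq, pow_two, Perm.mul_apply, coe_cycleRange_eq_mod, coe_cycleRange_eq_mod]
  split_ifs with h1 h2
  · rw [Nat.mod_add_mod]
  · exact absurd (Nat.le_of_lt_succ (Nat.mod_lt _ (Nat.succ_pos q))) h2
  · omega

lemma entry_rotTwo_of_mul_eq (h : τ * rotTwo n q = finRotate n * σ) (hq : q < n) {j : ℕ}
    (hj : j < n) :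
    entry τ (if j ≤ q then (j + 2) % (q + 1) else j) = (entry σ j + 1) % n := by
  have := congrArg (fun π : Perm (Fin n) => (π ⟨j, hj⟩ : ℕ)) h
  simp only [Perm.mul_apply, coe_finRotate_eq_mod] at this
  rwa [← entry_coe τ, ← entry_coe σ, coe_rotTwo hq] at this

lemma IsFrontMove.of_mul_eq (h : τ * rotTwo n (p + 1) = finRotate n * σ) (hp : 1 ≤ p)
    (hpn : p + 2 ≤ n) (hmax : entry σ p = n - 1) : IsFrontMove σ τ p := by
  have hrel := fun j => entry_rotTwo_of_mul_eq h (q := p + 1) (by omega) (j := j)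
  have hdel : delPos σ = p := (delPos_eq_iff (by omega)).2 hmax
  have hmod : ∀ j, j < n → j ≠ p → (entry σ j + 1) % n = entry σ j + 1 := fun j hj hjp =>
    Nat.mod_eq_of_lt (by have := entry_lt_pred hj (hdel ▸ hjp); omega)
  refine ⟨hp, hpn, hmax, ?_, ?_, fun i hi hin => ?_⟩
  · have := hrel (j := p) (by omega)
    rwa [if_pos (by omega), Nat.mod_self, hmax, Nat.sub_add_cancel (by omega),
      Nat.mod_self] at this
  · have := hrel (j := p + 1) (by omega)
    rwa [if_pos le_rfl, show p + 1 + 2 = 1 + (p + 1 + 1) by omega, Nat.add_mod_right,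
      Nat.mod_eq_of_lt (by omega), hmod _ (by omega) (by omega)] at this
  · unfold frontPos
    split_ifs with hip
    · have := hrel (j := i - 2) (by omega)
      rwa [if_pos (by omega), Nat.mod_eq_of_lt (by omega), Nat.sub_add_cancel hi,
        hmod _ (by omega) (by omega)] at this
    · have := hrel (j := i) hin
      rwa [if_neg hip, hmod _ hin (by omega)] at this

lemma entry_max_of_mul_eq (h : τ * rotTwo n (p + 1) = finRotate n * σ) (hpn : p + 2 ≤ n)
    (hτ : entry τ 0 = 0) : entry σ p = n - 1 := by
  have hrel := entry_rotTwo_of_mul_eq h (by omega) (j := p) (by omega)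
  rw [if_pos (by omega), Nat.mod_self, hτ] at hrel
  have hlt := entry_lt σ (show p < n by omega)
  rcases (show entry σ p + 1 < n ∨ entry σ p + 1 = n by omega) with h1 | h1
  · rw [Nat.mod_eq_of_lt h1] at hrel
    omega
  · omega

def lastBelowSecond (τ : Perm (Fin n)) : ℕ :=
  Nat.findGreatest (fun i => entry τ i < entry τ 1) (n - 1)

def toCset (σ : Perm (Fin n)) : Perm (Fin n) :=
  finRotate n * σ * (rotTwo n (delPos σ + 1))⁻¹

def toLset (τ : Perm (Fin n)) : Perm (Fin n) :=
  (finRotate n)⁻¹ * τ * rotTwo n (lastBelowSecond τ)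

lemma toCset_spec (hn : 2 ≤ n) (hσ : σ ∈ Lset n k) :
    toCset σ ∈ Cset n k ∧ lastBelowSecond (toCset σ) = delPos σ + 1 := by
  obtain ⟨hσk, hpn, hpred⟩ := (mem_Lset_iff hn).1 hσ
  obtain ⟨hF, hk⟩ := mem_flatSet.1 hσk
  set p := delPos σ
  have hp := hF.one_le_delPos hn
  have H : IsFrontMove σ (toCset σ) p :=
    .of_mul_eq (inv_mul_cancel_right _ _) hp hpn (entry_delPos (by omega) σ)
  have h0 : entry σ 0 < entry σ (p + 1) := by
    have := (entry_inj (σ := σ) (i := p + 1) (j := 0) (by omega) (by omega)).not.2 (by omega)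
    rw [hF.entry_zero (by omega)] at this ⊢
    omega
  have htail : ∀ j, p + 2 ≤ j → j < n → entry σ (p + 1) < entry σ j := fun j hj hjn =>
    lt_of_le_of_ne (WordFlattened.le_of_wordRunStart hF H.wordRunStart_succ (by omega) hjn)
      (by rw [ne_eq, entry_inj (by omega) hjn]; omega)
  refine ⟨(mem_Cset_iff (by omega)).2 ⟨mem_flatSet.2 ⟨H.isFlattened_right h0 hpred htail hF,
    (H.runCount_eq h0 hpred htail).trans hk⟩, by omega, ?_⟩, ?_⟩
  · rw [H.entry_one, H.entry_frontPos 2 le_rfl (by omega), frontPos_add_two (i := 0) hp]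
    omega
  · rw [lastBelowSecond, Nat.findGreatest_eq_iff]
    refine ⟨by omega, fun _ => ?_, fun j hj hjn => ?_⟩
    · rw [H.entry_pred, H.entry_one]
      omega
    · have := htail j (by omega) (by omega)
      rw [H.entry_frontPos j (by omega) (by omega), frontPos_of_lt hj, H.entry_one]
      omega

lemma toLset_spec (hn : 2 ≤ n) (hτ : τ ∈ Cset n k) :
    toLset τ ∈ Lset n k ∧ delPos (toLset τ) + 1 = lastBelowSecond τ := by
  obtain ⟨hτk, h2n, h21⟩ := (mem_Cset_iff (by omega)).1 hτ
  obtain ⟨hF, hk⟩ := mem_flatSet.1 hτk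
  have hq2 : 2 ≤ lastBelowSecond τ := Nat.le_findGreatest (by omega) h21
  have hqn : lastBelowSecond τ ≤ n - 1 := Nat.findGreatest_le _
  have hqlt : entry τ (lastBelowSecond τ) < entry τ 1 :=
    Nat.findGreatest_spec (P := fun i => entry τ i < entry τ 1) (m := 2) (by omega) h21
  have hqmax : ∀ j, lastBelowSecond τ < j → j ≤ n - 1 → ¬entry τ j < entry τ 1 :=
    fun _ => Nat.findGreatest_is_greatest
  obtain ⟨p, hp⟩ : ∃ p, lastBelowSecond τ = p + 1 := ⟨lastBelowSecond τ - 1, by omega⟩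
  rw [hp] at hq2 hqn hqlt hqmax ⊢
  have h : τ * rotTwo n (p + 1) = finRotate n * toLset τ := by
    rw [toLset, hp, ← mul_assoc, ← mul_assoc, mul_inv_cancel, one_mul]
  have H := IsFrontMove.of_mul_eq h (by omega) (by omega)
    (entry_max_of_mul_eq h (by omega) (hF.entry_zero (by omega)))
  have hpred : entry (toLset τ) (p - 1) < entry (toLset τ) (p + 1) := by
    rw [H.entry_pred, H.entry_one] at hqlt
    omega
  have h0 : entry (toLset τ) 0 < entry (toLset τ) (p + 1) := by
    rw [H.entry_one, H.entry_frontPos 2 le_rfl (by omega), frontPos_add_two (i := 0) H.one_le]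
      at h21
    omega
  have htail : ∀ j, p + 2 ≤ j → j < n → entry (toLset τ) (p + 1) < entry (toLset τ) j := by
    intro j hj hjn
    have := hqmax j (by omega) (by omega)
    have hne := (entry_inj (σ := toLset τ) (i := p + 1) (j := j) (by omega) hjn).not.2 (by omega)
    rw [H.entry_frontPos j (by omega) hjn, frontPos_of_lt (by omega), H.entry_one] at this
    omega
  refine ⟨(mem_Lset_iff hn).2 ⟨mem_flatSet.2 ⟨H.isFlattened_left h0 hpred htail hF,
    (H.runCount_eq h0 hpred htail).symm.trans hk⟩, ?_⟩, by rw [H.delPos_eq]⟩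
  rw [H.delPos_eq]
  exact ⟨H.add_two_le, hpred⟩

end Bijection

/-- For all integers `n`, `k` with `2 ≤ k < n`, the sets `C_{n,k}` and `L_{n,k}` have the
same cardinality. -/
theorem card_Cset_eq_card_Lset (n k : ℕ) (hk : 2 ≤ k) (hkn : k < n) :
    (Cset n k).card = (Lset n k).card := by
  have hn : 2 ≤ n := by omega
  symm
  refine card_nbij' toCset toLset (fun σ hσ => (toCset_spec hn hσ).1)
    (fun τ hτ => (toLset_spec hn hτ).1) (fun σ hσ => ?_) (fun τ hτ => ?_)
  · rw [toLset, (toCset_spec hn hσ).2, toCset]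
    group
  · rw [toCset, (toLset_spec hn hτ).2, toLset]
    group
end
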